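/- Fix a weight function g : ℕ² → ℝ≥0 and a Young diagram λ. For (i,j) ∈ λ define ψ(i,j) = ∑_{(p,q)∈ℕ², (i+p, j+q)∈λ} g(p,q) and ψ*(i,j) = ∑_{(p,q)∈ℕ², p ≤ i, q ≤ j} g(i−p, j−q). Then the multiset {ψ(u) : u ∈ λ} majorizes the multiset {ψ*(u) : u ∈ λ}. -/

import Mathlib

open scoped NNReal

/-- `ψ(i,j)`: sum of `g` over nonnegative shifts `(p,q)` with `(i+p, j+q)` still in `μ`. -/
noncomputable def psi (μ : YoungDiagram) (g : ℕ → ℕ → ℝ≥0) (c : ℕ × ℕ) : ℝ≥0 :=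
  ∑ d ∈ μ.cells.filter (fun d => c.1 ≤ d.1 ∧ c.2 ≤ d.2), g (d.1 - c.1) (d.2 - c.2)

/-- `ψ*(i,j)`: sum of `g(i-p, j-q)` over `p ≤ i`, `q ≤ j`. -/
noncomputable def psiStar (g : ℕ → ℕ → ℝ≥0) (c : ℕ × ℕ) : ℝ≥0 :=
  ∑ p ∈ Finset.range (c.1 + 1), ∑ q ∈ Finset.range (c.2 + 1), g (c.1 - p) (c.2 - q)

/-- The sum of the `k` largest elements of a multiset in `ℝ≥0`. -/
noncomputable def topSum (M : Multiset ℝ≥0) (k : ℕ) : ℝ≥0 :=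
  ((M.sort (· ≤ ·)).reverse.take k).sum


-- downward-closed Finset ℕ is a range
lemma dc_eq_range (A : Finset ℕ) (h : ∀ a ∈ A, ∀ b ≤ a, b ∈ A) : A = Finset.range A.card := by
  ext x
  simp only [Finset.mem_range]
  constructor
  · intro hx
    have : Finset.range (x+1) ⊆ A := by
      intro b hb
      exact h x hx b (by simpa [Nat.lt_succ_iff] using hb)
    have := Finset.card_le_card this
    simpa using this
  · intro hx
    by_contra hxA
    have : A ⊆ Finset.range x := by
      intro a ha
      simp only [Finset.mem_range]
      by_contra hax
      exact hxA (h a ha x (by omega))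
    have := Finset.card_le_card this
    simp at this
    omega

-- submultiset of a map is a map of a submultiset
lemma exists_le_map {α β : Type*} [DecidableEq α] [DecidableEq β] {f : α → β} :
    ∀ {N : Multiset β} {v : Multiset α}, N ≤ v.map f → ∃ u ≤ v, N = u.map f := by
  intro N
  induction N using Multiset.induction with
  | empty => exact fun _ => ⟨0, by simp, by simp⟩
  | cons b N' ih =>
    intro v h
    have hb : b ∈ v.map f := Multiset.mem_of_le h (Multiset.mem_cons_self _ _)
    obtain ⟨a, ha, rfl⟩ := Multiset.mem_map.mp hb
    have h1 : N' ≤ (v.map f).erase (f a) := by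
      have := Multiset.erase_le_erase (f a) h
      simpa using this
    have h2 : (v.map f).erase (f a) = (v.erase a).map f := by
      conv_lhs => rw [← Multiset.cons_erase ha]
      simp
    rw [h2] at h1
    obtain ⟨u', hu', rfl⟩ := ih h1
    refine ⟨a ::ₘ u', ?_, by simp⟩
    calc a ::ₘ u' ≤ a ::ₘ v.erase a := Multiset.cons_le_cons a hu'
    _ = v := Multiset.cons_erase ha

noncomputable def topSum' (M : Multiset ℝ≥0) (k : ℕ) : ℝ≥0 :=
  ((M.sort (· ≤ ·)).reverse.take k).sum

-- monotone take sums for nonneg lists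
lemma sum_take_mono (l : List ℝ≥0) (k : ℕ) : (l.take k).sum ≤ (l.take (k+1)).sum := by
  rcases le_or_gt l.length k with h | h
  · rw [List.take_of_length_le h, List.take_of_length_le (by omega)]
  · rw [List.sum_take_succ _ _ h]
    exact le_self_add

lemma le_cons_of_not_mem {α : Type*} {N s : Multiset α} {a : α}
    (h : N ≤ a ::ₘ s) (ha : a ∉ N) : N ≤ s := by
  classical
  rw [Multiset.le_iff_count] at h ⊢
  intro x
  have := h x
  rcases eq_or_ne x a with rfl | hx
  · simp [Multiset.count_eq_zero_of_notMem ha]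
  · simpa [Multiset.count_cons_of_ne hx] using this

-- key: any submultiset of ≤ k elements has sum at most sum of top-k of sorted-descending list
lemma sum_le_sum_take (l : List ℝ≥0) (hl : l.Pairwise (· ≥ ·)) :
    ∀ (k : ℕ) (N : Multiset ℝ≥0), N ≤ ↑l → N.card ≤ k → N.sum ≤ (l.take k).sum := by
  induction l with
  | nil =>
    intro k N hN _
    have : N = 0 := le_antisymm (by simpa using hN) (Multiset.zero_le _)
    simp [this]
  | cons a l ih =>
    have hal : ∀ x ∈ l, x ≤ a := fun x hx => (List.rel_of_pairwise_cons hl hx)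
    have hl' : l.Pairwise (· ≥ ·) := hl.of_cons
    intro k N hN hcard
    match k with
    | 0 =>
      interval_cases h : N.card
      have : N = 0 := Multiset.card_eq_zero.mp h
      simp [this]
    | (k+1) =>
      rw [List.take_succ_cons, List.sum_cons]
      by_cases haN : a ∈ N
      · have h1 : N.erase a ≤ ↑l := by
          have := Multiset.erase_le_erase (α := ℝ≥0) a hN
          simpa [Multiset.erase_cons_head] using this
        have h2 : (N.erase a).card ≤ k := by
          have := Multiset.card_erase_of_mem haN
          rw [Nat.pred_eq_sub_one] at this
          have h3 : 0 < Multiset.card N := Multiset.card_pos.mpr (by rintro rfl; simp at haN)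
          omega
        have := ih hl' k (N.erase a) h1 h2
        have hsum : N.sum = a + (N.erase a).sum := by
          conv_lhs => rw [← Multiset.cons_erase haN]
          simp
        rw [hsum]
        exact add_le_add (le_refl a) this
      · have hNl : N ≤ ↑l := le_cons_of_not_mem (by simpa using hN) haN
        rcases le_or_gt N.card k with h | h
        · exact (ih hl' k N hNl h).trans le_add_self
        · -- N.card = k+1
          obtain ⟨b, hb⟩ : ∃ b, b ∈ N := Multiset.exists_mem_of_ne_zero (by
            intro h0; rw [h0] at h; simp at h)
          have hba : b ≤ a := hal b (by
            have : b ∈ (↑l : Multiset ℝ≥0) := Multiset.mem_of_le hNl hb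
            simpa using this)
          have h1 : N.erase b ≤ ↑l := le_trans (Multiset.erase_le b N) hNl
          have h2 : (N.erase b).card ≤ k := by
            have := Multiset.card_erase_of_mem hb
            rw [Nat.pred_eq_sub_one] at this
            have h3 : 0 < Multiset.card N := Multiset.card_pos.mpr (by rintro rfl; simp at hb)
            omega
          have hsum : N.sum = b + (N.erase b).sum := by
            conv_lhs => rw [← Multiset.cons_erase hb]
            simp
          rw [hsum]
          exact add_le_add hba (ih hl' k (N.erase b) h1 h2)

lemma sorted_ge_rev_sort (M : Multiset ℝ≥0) : ((M.sort (· ≤ ·)).reverse).Pairwise (· ≥ ·) := by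
  rw [List.pairwise_reverse]
  exact (Multiset.pairwise_sort M (· ≤ ·)).imp (fun h => h)

lemma coe_rev_sort (M : Multiset ℝ≥0) : (↑((M.sort (· ≤ ·)).reverse) : Multiset ℝ≥0) = M := by
  rw [Multiset.coe_reverse, Multiset.sort_eq]

lemma le_topSum' (M : Multiset ℝ≥0) (k : ℕ) (N : Multiset ℝ≥0) (hN : N ≤ M)
    (hcard : N.card ≤ k) : N.sum ≤ topSum' M k := by
  have := sum_le_sum_take _ (sorted_ge_rev_sort M) k N (by rwa [coe_rev_sort]) hcard
  exact this

lemma topSum'_eq (M : Multiset ℝ≥0) (k : ℕ) :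
    ∃ N ≤ M, N.card = min k (Multiset.card M) ∧ N.sum = topSum' M k := by
  refine ⟨↑(((M.sort (· ≤ ·)).reverse).take k), ?_, ?_, ?_⟩
  · have h1 : (↑(((M.sort (· ≤ ·)).reverse).take k) : Multiset ℝ≥0) ≤
        ↑((M.sort (· ≤ ·)).reverse) :=
      Multiset.coe_le.mpr (List.take_sublist k _).subperm
    rwa [coe_rev_sort] at h1
  · rw [Multiset.coe_card, List.length_take, List.length_reverse, Multiset.length_sort]
  · rw [topSum']
    exact Multiset.sum_coe _

lemma filter_lt_range (n N : ℕ) (h : n ≤ N) :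
    (Finset.range N).filter (fun j => j < n) = Finset.range n := by
  ext j
  simp only [Finset.mem_filter, Finset.mem_range]
  omega

lemma filter_lt_lt_range (a b N : ℕ) (hb : b ≤ N) :
    (Finset.range N).filter (fun m => m < a ∧ m < b) = Finset.range (min a b) := by
  ext m
  simp only [Finset.mem_filter, Finset.mem_range]
  omega

lemma cell_bounds (μ : YoungDiagram) {u : ℕ × ℕ} (hu : u ∈ μ.cells) :
    u.1 < μ.colLen 0 ∧ u.2 < μ.rowLen 0 := by
  rw [YoungDiagram.mem_cells] at hu
  have h1 : u.1 < μ.colLen u.2 := YoungDiagram.mem_iff_lt_colLen.mp (by simpa using hu)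
  have h2 : u.2 < μ.rowLen u.1 := YoungDiagram.mem_iff_lt_rowLen.mp (by simpa using hu)
  exact ⟨lt_of_lt_of_le h1 (μ.colLen_anti 0 u.2 (Nat.zero_le _)),
    lt_of_lt_of_le h2 (μ.rowLen_anti 0 u.1 (Nat.zero_le _))⟩

lemma psiStar_eq (μ : YoungDiagram) (g : ℕ → ℕ → ℝ≥0) {c : ℕ × ℕ} (hc : c ∈ μ.cells) :
    psiStar g c = ∑ d ∈ μ.cells.filter (fun d => d.1 ≤ c.1 ∧ d.2 ≤ c.2),
      g (c.1 - d.1) (c.2 - d.2) := by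
  have hset : μ.cells.filter (fun d => d.1 ≤ c.1 ∧ d.2 ≤ c.2)
      = Finset.range (c.1+1) ×ˢ Finset.range (c.2+1) := by
    ext ⟨a, b⟩
    simp only [Finset.mem_filter, YoungDiagram.mem_cells, Finset.mem_product, Finset.mem_range,
      Nat.lt_succ_iff]
    constructor
    · rintro ⟨_, h1, h2⟩; exact ⟨h1, h2⟩
    · rintro ⟨h1, h2⟩
      exact ⟨μ.up_left_mem h1 h2 (by simpa using (YoungDiagram.mem_cells (μ := μ) c).mp hc), h1, h2⟩
  rw [hset, Finset.sum_product, psiStar]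

lemma sum_psi_eq_sum_psiStar (μ : YoungDiagram) (g : ℕ → ℕ → ℝ≥0) :
    ∑ c ∈ μ.cells, psi μ g c = ∑ c ∈ μ.cells, psiStar g c := by
  symm
  calc ∑ c ∈ μ.cells, psiStar g c
      = ∑ c ∈ μ.cells, ∑ d ∈ μ.cells,
          if d.1 ≤ c.1 ∧ d.2 ≤ c.2 then g (c.1 - d.1) (c.2 - d.2) else 0 := by
        refine Finset.sum_congr rfl fun c hc => ?_
        rw [psiStar_eq μ g hc, Finset.sum_filter]
    _ = ∑ d ∈ μ.cells, ∑ c ∈ μ.cells,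
          if d.1 ≤ c.1 ∧ d.2 ≤ c.2 then g (c.1 - d.1) (c.2 - d.2) else 0 := Finset.sum_comm
    _ = ∑ d ∈ μ.cells, psi μ g d := by
        refine Finset.sum_congr rfl fun d _ => ?_
        rw [psi, Finset.sum_filter]

lemma key_construction (μ : YoungDiagram) (g : ℕ → ℕ → ℝ≥0) (T : Finset (ℕ × ℕ))
    (hT : T ⊆ μ.cells) :
    ∃ S ⊆ μ.cells, S.card ≤ T.card ∧ ∑ u ∈ T, psiStar g u ≤ ∑ v ∈ S, psi μ g v := by
  classical
  set R := μ.colLen 0 with hR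
  set Mb := μ.rowLen 0 with hMb
  set t : ℕ → ℕ := fun i => (T.filter (fun u => u.1 = i)).card with ht
  set gc : ℕ → ℕ := fun m => ((Finset.range R).filter (fun i => m < t i)).card with hgc
  set s : ℕ → ℕ := fun j => ((Finset.range Mb).filter (fun m => j < gc m)).card with hs
  set S : Finset (ℕ × ℕ) := μ.cells.filter (fun v => v.2 < s v.1) with hS
  -- basic bounds
  have hTbound : ∀ u ∈ T, u.1 < R ∧ u.2 < Mb := fun u hu => cell_bounds μ (hT hu)
  have ht_le : ∀ i, t i ≤ μ.rowLen i := by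
    intro i
    show (T.filter (fun u => u.1 = i)).card ≤ μ.rowLen i
    calc (T.filter (fun u => u.1 = i)).card ≤ (Finset.range (μ.rowLen i)).card := by
          refine Finset.card_le_card_of_injOn (fun u => u.2) ?_ ?_
          · intro u hu
            simp only [Finset.mem_coe, Finset.mem_filter] at hu
            have := YoungDiagram.mem_iff_lt_rowLen.mp
              (by simpa using (YoungDiagram.mem_cells (μ := μ) u).mp (hT hu.1))
            rw [hu.2] at this
            simpa using this
          · intro u hu u' hu' h
            simp only [Finset.coe_filter, Set.mem_setOf_eq] at hu hu'
            exact Prod.ext (hu.2.trans hu'.2.symm) h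
    _ = μ.rowLen i := Finset.card_range _
  have ht_Mb : ∀ i, t i ≤ Mb := fun i =>
    (ht_le i).trans (μ.rowLen_anti 0 i (Nat.zero_le _))
  have ht_zero : ∀ i, R ≤ i → t i = 0 := by
    intro i hi
    rw [ht]
    simp only [Finset.card_eq_zero]
    rw [Finset.filter_eq_empty_iff]
    intro u hu
    have := (hTbound u hu).1
    intro h; rw [h] at this; omega
  have ht_pos_lt : ∀ i, 0 < t i → i < R := by
    intro i h
    by_contra hc
    rw [ht_zero i (by omega)] at h
    omega
  have hgc_anti : ∀ m m', m ≤ m' → gc m' ≤ gc m := by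
    intro m m' h
    apply Finset.card_le_card
    intro i hi
    simp only [Finset.mem_filter] at hi ⊢
    exact ⟨hi.1, by omega⟩
  have hgc_le : ∀ m, gc m ≤ R := fun m => (Finset.card_filter_le _ _).trans (by simp)
  have hgc_zero : ∀ m, Mb ≤ m → gc m = 0 := by
    intro m hm
    rw [hgc]
    simp only [Finset.card_eq_zero]
    rw [Finset.filter_eq_empty_iff]
    intro i _
    have := ht_Mb i
    omega
  -- the key equivalence
  have hE : ∀ m j, m < s j ↔ j < gc m := by
    intro m j
    have hA : (Finset.range Mb).filter (fun m => j < gc m)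
        = Finset.range (s j) := by
      apply dc_eq_range
      intro a ha b hb
      simp only [Finset.mem_filter, Finset.mem_range] at ha ⊢
      exact ⟨by omega, lt_of_lt_of_le ha.2 (hgc_anti b a hb)⟩
    constructor
    · intro h
      have : m ∈ Finset.range (s j) := Finset.mem_range.mpr h
      rw [← hA] at this
      simp only [Finset.mem_filter] at this
      exact this.2
    · intro h
      have hmMb : m < Mb := by
        by_contra hc
        rw [hgc_zero m (by omega)] at h
        omega
      have : m ∈ (Finset.range Mb).filter (fun m => j < gc m) := by
        simp only [Finset.mem_filter, Finset.mem_range]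
        exact ⟨hmMb, h⟩
      rw [hA] at this
      simpa using this
  have hs_anti : ∀ j j', j ≤ j' → s j' ≤ s j := by
    intro j j' h
    by_contra hc
    push_neg at hc
    have h1 : j' < gc (s j) := (hE (s j) j').mp hc
    have h2 : j < gc (s j) := by omega
    have := (hE (s j) j).mpr h2
    omega
  -- sum of s equals card T
  have hs_sum : ∑ j ∈ Finset.range R, s j = T.card := by
    have h1 : T.card = ∑ i ∈ Finset.range R, t i := by
      rw [ht]
      exact Finset.card_eq_sum_card_fiberwise (fun u hu => Finset.mem_range.mpr (hTbound u hu).1)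
    rw [h1]
    calc ∑ j ∈ Finset.range R, s j
        = ∑ j ∈ Finset.range R, ∑ m ∈ Finset.range Mb, if j < gc m then 1 else 0 := by
          refine Finset.sum_congr rfl fun j _ => ?_
          rw [hs]
          exact Finset.card_filter _ _
      _ = ∑ m ∈ Finset.range Mb, ∑ j ∈ Finset.range R, if j < gc m then 1 else 0 :=
          Finset.sum_comm
      _ = ∑ m ∈ Finset.range Mb, gc m := by
          refine Finset.sum_congr rfl fun m _ => ?_
          rw [← Finset.card_filter, filter_lt_range _ _ (hgc_le m), Finset.card_range]
      _ = ∑ m ∈ Finset.range Mb, ∑ i ∈ Finset.range R, if m < t i then 1 else 0 := by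
          refine Finset.sum_congr rfl fun m _ => ?_
          rw [hgc]
          exact Finset.card_filter _ _
      _ = ∑ i ∈ Finset.range R, ∑ m ∈ Finset.range Mb, if m < t i then 1 else 0 :=
          Finset.sum_comm
      _ = ∑ i ∈ Finset.range R, t i := by
          refine Finset.sum_congr rfl fun i _ => ?_
          rw [← Finset.card_filter, filter_lt_range _ _ (ht_Mb i), Finset.card_range]
  -- S basic
  have hS_sub : S ⊆ μ.cells := Finset.filter_subset _ _
  have hS_card : S.card ≤ T.card := by
    have h1 : S.card = ∑ i ∈ Finset.range R, (S.filter (fun v => v.1 = i)).card :=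
      Finset.card_eq_sum_card_fiberwise
        (fun v hv => Finset.mem_range.mpr (cell_bounds μ (hS_sub hv)).1)
    rw [h1, ← hs_sum]
    refine Finset.sum_le_sum fun i _ => ?_
    calc (S.filter (fun v => v.1 = i)).card ≤ (Finset.range (s i)).card := by
          refine Finset.card_le_card_of_injOn (fun v => v.2) ?_ ?_
          · intro v hv
            simp only [hS, Finset.mem_coe, Finset.mem_filter] at hv
            rw [Finset.mem_coe, Finset.mem_range, ← hv.2]
            exact hv.1.2
          · intro v hv v' hv' h
            simp only [Finset.coe_filter, Set.mem_setOf_eq] at hv hv'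
            exact Prod.ext (hv.2.trans hv'.2.symm) h
      _ = s i := Finset.card_range _
  -- the per-shift counting inequality
  have hcount : ∀ p q : ℕ,
      (T.filter (fun u => p ≤ u.1 ∧ q ≤ u.2)).card
        ≤ (S.filter (fun v => (v.1 + p, v.2 + q) ∈ μ)).card := by
    intro p q
    set c : ℕ → ℕ := fun j => μ.rowLen (j + p) - q with hc
    have hc_le : ∀ j, c j ≤ Mb :=
      fun j => le_trans (Nat.sub_le _ _) (μ.rowLen_anti 0 (j + p) (Nat.zero_le _))
    have hc_anti : ∀ j j', j ≤ j' → c j' ≤ c j := by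
      intro j j' h
      have := μ.rowLen_anti (j + p) (j' + p) (by omega)
      simp only [hc]
      omega
    -- Step (a): LHS ≤ ∑ j < R, min (t (j+p)) (c j)
    have stepa : (T.filter (fun u => p ≤ u.1 ∧ q ≤ u.2)).card
        ≤ ∑ j ∈ Finset.range R, min (t (j + p)) (c j) := by
      have h1 : (T.filter (fun u => p ≤ u.1 ∧ q ≤ u.2)).card
          = ∑ j ∈ Finset.range R,
            ((T.filter (fun u => p ≤ u.1 ∧ q ≤ u.2)).filter (fun u => u.1 - p = j)).card := by
        refine Finset.card_eq_sum_card_fiberwise fun u hu => ?_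
        have := (hTbound u (Finset.mem_filter.mp hu).1).1
        rw [Finset.mem_coe, Finset.mem_range]
        omega
      rw [h1]
      refine Finset.sum_le_sum fun j _ => ?_
      refine le_min ?_ ?_
      · -- ≤ t (j + p)
        show _ ≤ (T.filter (fun u => u.1 = j + p)).card
        refine Finset.card_le_card fun u hu => ?_
        simp only [Finset.mem_filter] at hu ⊢
        exact ⟨hu.1.1, by omega⟩
      · -- ≤ c j
        calc ((T.filter (fun u => p ≤ u.1 ∧ q ≤ u.2)).filter (fun u => u.1 - p = j)).card
            ≤ (Finset.range (c j)).card := by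
              refine Finset.card_le_card_of_injOn (fun u => u.2 - q) ?_ ?_
              · intro u hu
                simp only [Finset.mem_coe, Finset.mem_filter] at hu
                obtain ⟨⟨huT, hp, hq⟩, hj⟩ := hu
                have hrow : u.2 < μ.rowLen u.1 := YoungDiagram.mem_iff_lt_rowLen.mp
                  (by simpa using (YoungDiagram.mem_cells (μ := μ) u).mp (hT huT))
                have : u.1 = j + p := by omega
                rw [this] at hrow
                rw [Finset.mem_coe, Finset.mem_range]
                simp only [hc]
                omega
              · intro u hu u' hu' h
                simp only [Finset.coe_filter, Set.mem_setOf_eq, Finset.mem_filter] at hu hu'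
                obtain ⟨⟨_, hp1, hq1⟩, hj1⟩ := hu
                obtain ⟨⟨_, hp2, hq2⟩, hj2⟩ := hu'
                have hyy : u.2 - q = u'.2 - q := h
                have h1 : u.1 = u'.1 := by omega
                have h2 : u.2 = u'.2 := by omega
                exact Prod.ext h1 h2
          _ = c j := Finset.card_range _
    -- Step (b): ∑ j < R, min (t (j+p)) (c j) ≤ ∑ j < R, min (s j) (c j)
    have stepb : ∑ j ∈ Finset.range R, min (t (j + p)) (c j)
        ≤ ∑ j ∈ Finset.range R, min (s j) (c j) := by
      have expand : ∀ a : ℕ → ℕ, (∀ j, min (a j) (c j) ≤ Mb) →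
          ∑ j ∈ Finset.range R, min (a j) (c j)
            = ∑ m ∈ Finset.range Mb, ((Finset.range R).filter
                (fun j => m < a j ∧ m < c j)).card := by
        intro a ha
        calc ∑ j ∈ Finset.range R, min (a j) (c j)
            = ∑ j ∈ Finset.range R, ∑ m ∈ Finset.range Mb,
                if m < a j ∧ m < c j then 1 else 0 := by
              refine Finset.sum_congr rfl fun j _ => ?_
              rw [← Finset.card_filter, filter_lt_lt_range _ _ _ (hc_le j), Finset.card_range]
          _ = ∑ m ∈ Finset.range Mb, ∑ j ∈ Finset.range R,
                if m < a j ∧ m < c j then 1 else 0 := Finset.sum_comm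
          _ = _ := by
              refine Finset.sum_congr rfl fun m _ => ?_
              rw [Finset.card_filter]
      rw [expand (fun j => t (j + p)) (fun j => (min_le_right _ _).trans (hc_le j)),
        expand s (fun j => (min_le_right _ _).trans (hc_le j))]
      refine Finset.sum_le_sum fun m _ => ?_
      set f := ((Finset.range R).filter (fun j => m < c j)).card with hf
      have hfrange : (Finset.range R).filter (fun j => m < c j) = Finset.range f := by
        apply dc_eq_range
        intro a ha b hb
        simp only [Finset.mem_filter, Finset.mem_range] at ha ⊢
        exact ⟨by omega, lt_of_lt_of_le ha.2 (hc_anti b a hb)⟩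
      have hf_le_R : f ≤ R := (Finset.card_filter_le _ _).trans (by simp)
      have hRHS : (Finset.range R).filter (fun j => m < s j ∧ m < c j)
          = Finset.range (min (gc m) f) := by
        ext j
        simp only [Finset.mem_filter, Finset.mem_range, lt_min_iff]
        constructor
        · rintro ⟨hjR, hjs, hjc⟩
          refine ⟨(hE m j).mp hjs, ?_⟩
          have : j ∈ (Finset.range R).filter (fun j => m < c j) := by
            simp only [Finset.mem_filter, Finset.mem_range]
            exact ⟨hjR, hjc⟩
          rw [hfrange, Finset.mem_range] at this
          exact this
        · rintro ⟨hjg, hjf⟩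
          have : j ∈ (Finset.range R).filter (fun j => m < c j) := by
            rw [hfrange, Finset.mem_range]
            exact hjf
          simp only [Finset.mem_filter, Finset.mem_range] at this
          exact ⟨this.1, (hE m j).mpr hjg, this.2⟩
      rw [hRHS, Finset.card_range]
      refine le_min ?_ ?_
      · -- ≤ gc m via j ↦ j + p
        rw [hgc]
        refine Finset.card_le_card_of_injOn (fun j => j + p) ?_ ?_
        · intro j hj
          simp only [Finset.mem_coe, Finset.mem_filter, Finset.mem_range] at hj ⊢
          exact ⟨ht_pos_lt _ (by omega), hj.2.1⟩
        · intro j _ j' _ h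
          have : j + p = j' + p := h
          omega
      · -- ≤ f
        rw [hf]
        refine Finset.card_le_card fun j hj => ?_
        simp only [Finset.mem_filter] at hj ⊢
        exact ⟨hj.1, hj.2.2⟩
    -- Step (c): ∑ j < R, min (s j) (c j) ≤ RHS
    have stepc : ∑ j ∈ Finset.range R, min (s j) (c j)
        ≤ (S.filter (fun v => (v.1 + p, v.2 + q) ∈ μ)).card := by
      have h1 : (S.filter (fun v => (v.1 + p, v.2 + q) ∈ μ)).card
          = ∑ j ∈ Finset.range R,
            ((S.filter (fun v => (v.1 + p, v.2 + q) ∈ μ)).filter (fun v => v.1 = j)).card := by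
        refine Finset.card_eq_sum_card_fiberwise fun v hv => ?_
        exact Finset.mem_range.mpr (cell_bounds μ (hS_sub (Finset.mem_filter.mp hv).1)).1
      rw [h1]
      refine Finset.sum_le_sum fun j _ => ?_
      calc min (s j) (c j) = (Finset.range (min (s j) (c j))).card :=
            (Finset.card_range _).symm
        _ ≤ _ := by
            refine Finset.card_le_card_of_injOn (fun y => (j, y)) ?_ ?_
            · intro y hy
              rw [Finset.mem_coe, Finset.mem_range, lt_min_iff] at hy
              have hyc : y + q < μ.rowLen (j + p) := by
                have := hy.2
                simp only [hc] at this
                omega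
              have hmem2 : ((j + p : ℕ), y + q) ∈ μ := YoungDiagram.mem_iff_lt_rowLen.mpr hyc
              have hmemμ : ((j : ℕ), y) ∈ μ := μ.up_left_mem (by omega) (by omega) hmem2
              have hvS : ((j : ℕ), y) ∈ S := by
                rw [hS]
                simp only [Finset.mem_filter]
                exact ⟨(YoungDiagram.mem_cells (μ := μ) _).mpr hmemμ, hy.1⟩
              simp only [Finset.mem_coe, Finset.mem_filter]
              exact ⟨⟨hvS, hmem2⟩, trivial⟩
            · intro y _ y' _ h
              simpa using congrArg Prod.snd h
    exact stepa.trans (stepb.trans stepc)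
  -- conclude
  refine ⟨S, hS_sub, hS_card, ?_⟩
  set Box : Finset (ℕ × ℕ) := Finset.range R ×ˢ Finset.range Mb with hBox
  have h1 : ∀ u ∈ T, psiStar g u
      = ∑ w ∈ Box, if w.1 ≤ u.1 ∧ w.2 ≤ u.2 then g w.1 w.2 else 0 := by
    intro u hu
    have hrefl : psiStar g u = ∑ a ∈ Finset.range (u.1 + 1), ∑ b ∈ Finset.range (u.2 + 1),
        g a b := by
      rw [psiStar]
      rw [← Finset.sum_range_reflect (fun a => ∑ b ∈ Finset.range (u.2 + 1), g a b) (u.1 + 1)]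
      refine Finset.sum_congr rfl fun a _ => ?_
      rw [← Finset.sum_range_reflect (fun b => g (u.1 + 1 - 1 - a) b) (u.2 + 1)]
      simp
    rw [hrefl, ← Finset.sum_filter]
    have hset : Box.filter (fun w => w.1 ≤ u.1 ∧ w.2 ≤ u.2)
        = Finset.range (u.1 + 1) ×ˢ Finset.range (u.2 + 1) := by
      have hub := hTbound u hu
      ext ⟨a, b⟩
      simp only [hBox, Finset.mem_filter, Finset.mem_product, Finset.mem_range]
      omega
    rw [hset, Finset.sum_product]
  have h2 : ∀ v ∈ S, psi μ g v
      = ∑ w ∈ Box, if (v.1 + w.1, v.2 + w.2) ∈ μ then g w.1 w.2 else 0 := by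
    intro v hv
    rw [← Finset.sum_filter, psi]
    refine Finset.sum_nbij' (fun d => (d.1 - v.1, d.2 - v.2))
      (fun w => (v.1 + w.1, v.2 + w.2)) ?_ ?_ ?_ ?_ ?_
    · intro d hd
      simp only [Finset.mem_filter] at hd
      obtain ⟨hdc, h1d, h2d⟩ := hd
      have hb := cell_bounds μ hdc
      simp only [hBox, Finset.mem_filter, Finset.mem_product, Finset.mem_range]
      refine ⟨⟨by omega, by omega⟩, ?_⟩
      have : (v.1 + (d.1 - v.1), v.2 + (d.2 - v.2)) = (d.1, d.2) := by
        simp only [Prod.mk.injEq]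
        omega
      rw [this]
      simpa using (YoungDiagram.mem_cells (μ := μ) d).mp hdc
    · intro w hw
      simp only [hBox, Finset.mem_filter, Finset.mem_product, Finset.mem_range] at hw
      simp only [Finset.mem_filter]
      exact ⟨(YoungDiagram.mem_cells (μ := μ) _).mpr hw.2, by simp, by simp⟩
    · intro d hd
      simp only [Finset.mem_filter] at hd
      obtain ⟨_, h1d, h2d⟩ := hd
      exact Prod.ext (by simp; omega) (by simp; omega)
    · intro w _
      exact Prod.ext (by simp) (by simp)
    · intro d _
      rfl
  calc ∑ u ∈ T, psiStar g u
      = ∑ u ∈ T, ∑ w ∈ Box, (if w.1 ≤ u.1 ∧ w.2 ≤ u.2 then g w.1 w.2 else 0) :=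
        Finset.sum_congr rfl h1
    _ = ∑ w ∈ Box, ∑ u ∈ T, (if w.1 ≤ u.1 ∧ w.2 ≤ u.2 then g w.1 w.2 else 0) :=
        Finset.sum_comm
    _ = ∑ w ∈ Box, (T.filter (fun u => w.1 ≤ u.1 ∧ w.2 ≤ u.2)).card • g w.1 w.2 := by
        refine Finset.sum_congr rfl fun w _ => ?_
        rw [← Finset.sum_filter, Finset.sum_const]
    _ ≤ ∑ w ∈ Box, (S.filter (fun v => (v.1 + w.1, v.2 + w.2) ∈ μ)).card • g w.1 w.2 := by
        refine Finset.sum_le_sum fun w _ => ?_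
        rw [nsmul_eq_mul, nsmul_eq_mul]
        exact mul_le_mul_left (by exact_mod_cast hcount w.1 w.2) _
    _ = ∑ w ∈ Box, ∑ v ∈ S, (if (v.1 + w.1, v.2 + w.2) ∈ μ then g w.1 w.2 else 0) := by
        refine Finset.sum_congr rfl fun w _ => ?_
        rw [← Finset.sum_filter, Finset.sum_const]
    _ = ∑ v ∈ S, ∑ w ∈ Box, (if (v.1 + w.1, v.2 + w.2) ∈ μ then g w.1 w.2 else 0) :=
        Finset.sum_comm
    _ = ∑ v ∈ S, psi μ g v := (Finset.sum_congr rfl h2).symm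


/-- The multiset of weighted numbers `ψ(u)` majorizes the multiset `ψ*(u)`. -/
theorem psi_majorizes_psiStar (μ : YoungDiagram) (g : ℕ → ℕ → ℝ≥0) :
    (μ.cells.val.map (psi μ g)).sum = (μ.cells.val.map (psiStar g)).sum ∧
    ∀ k, topSum (μ.cells.val.map (psiStar g)) k ≤ topSum (μ.cells.val.map (psi μ g)) k := by
  classical
  constructor
  · exact sum_psi_eq_sum_psiStar μ g
  · intro k
    have htop : topSum (μ.cells.val.map (psiStar g)) k
        = topSum' (μ.cells.val.map (psiStar g)) k := rfl
    obtain ⟨N, hNle, hNcard, hNsum⟩ := topSum'_eq (μ.cells.val.map (psiStar g)) k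
    obtain ⟨u, hu, rfl⟩ := exists_le_map hNle
    have hnodup : u.Nodup := Multiset.nodup_of_le hu μ.cells.nodup
    set T : Finset (ℕ × ℕ) := ⟨u, hnodup⟩ with hTdef
    have hTsub : T ⊆ μ.cells := by
      rw [← Finset.val_le_iff]
      exact hu
    have hTcard : T.card ≤ k := by
      have : T.card = Multiset.card (u.map (psiStar g)) := by
        simp [hTdef, Finset.card]
      rw [this, hNcard]
      exact min_le_left _ _
    obtain ⟨S, hSsub, hScard, hsum⟩ := key_construction μ g T hTsub
    have hstep1 : topSum (μ.cells.val.map (psiStar g)) k = ∑ x ∈ T, psiStar g x := by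
      rw [htop, ← hNsum]
      rfl
    have hstep2 : ∑ x ∈ S, psi μ g x ≤ topSum (μ.cells.val.map (psi μ g)) k := by
      have hle : S.val.map (psi μ g) ≤ μ.cells.val.map (psi μ g) :=
        Multiset.map_le_map (Finset.val_le_iff.mpr hSsub)
      have hcard : Multiset.card (S.val.map (psi μ g)) ≤ k := by
        simpa using hScard.trans hTcard
      exact le_topSum' _ k _ hle hcard
    calc topSum (μ.cells.val.map (psiStar g)) k = ∑ x ∈ T, psiStar g x := hstep1
      _ ≤ ∑ x ∈ S, psi μ g x := hsum
      _ ≤ _ := hstep2
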